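/- Let S be a commutative ring of characteristic p. The map sending u to its 0-th Witt coordinate u₀ is a surjective group homomorphism from the group G(S) = {u ∈ W(S)^× : frobenius u = 1} onto the group μ_p(S) = {ζ ∈ S^× : ζ^p = 1}, and the Teichmüller map ζ ↦ [ζ] defines a group-theoretic section of it. -/

import Mathlib

/-!
In characteristic `p` the Witt vector Frobenius raises every Witt coordinate to the `p`-th power,
so a unit `u` with `frobenius u = 1` has `u₀ ^ p = 1`. Conversely, Frobenius sends `[ζ]` to
`[ζ ^ p]`, so the Teichmüller lift of a `p`-th root of unity is fixed by Frobenius; and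
`[ζ]₀ = ζ` makes the lift a section of `u ↦ u₀`, which is therefore surjective.
-/

namespace WittVector

variable {p : ℕ} [Fact p.Prime] {S : Type*} [CommRing S]

variable (p S) in
noncomputable def frobeniusFixedUnits : Subgroup (WittVector p S)ˣ :=
  (Units.map (frobenius : WittVector p S →+* WittVector p S).toMonoidHom).ker

theorem mem_frobeniusFixedUnits {u : (WittVector p S)ˣ} :
    u ∈ frobeniusFixedUnits p S ↔ frobenius (u : WittVector p S) = 1 := by
  simp [frobeniusFixedUnits, Units.ext_iff]

variable [CharP S p]

theorem frobenius_teichmuller (x : S) : frobenius (teichmuller p x) = teichmuller p (x ^ p) := by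
  rw [frobenius_eq_map_frobenius, map_teichmuller, frobenius_def]

theorem coeff_zero_pow_eq_one_of_frobenius_eq_one {w : WittVector p S} (hw : frobenius w = 1) :
    w.coeff 0 ^ p = 1 := by
  rw [← coeff_frobenius_charP, hw, one_coeff_zero]

variable (p S)

noncomputable def unitsCoeffZero : frobeniusFixedUnits p S →* rootsOfUnity p S :=
  ((Units.map (constantCoeff : WittVector p S →+* S).toMonoidHom).comp
      (frobeniusFixedUnits p S).subtype).codRestrict _ fun u =>
    (mem_rootsOfUnity' p _).mpr <|
      coeff_zero_pow_eq_one_of_frobenius_eq_one (mem_frobeniusFixedUnits.mp u.2)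

noncomputable def unitsTeichmuller : rootsOfUnity p S →* frobeniusFixedUnits p S :=
  ((Units.map (teichmuller p (R := S))).comp (rootsOfUnity p S).subtype).codRestrict _ fun ζ =>
    mem_frobeniusFixedUnits.mpr <| by
      simp [frobenius_teichmuller, (mem_rootsOfUnity' p _).mp ζ.2]

theorem unitsCoeffZero_comp_unitsTeichmuller :
    (unitsCoeffZero p S).comp (unitsTeichmuller p S) = MonoidHom.id _ := by
  ext ζ
  exact teichmuller_coeff_zero p _

theorem unitsCoeffZero_surjective : Function.Surjective (unitsCoeffZero p S) :=
  Function.LeftInverse.surjective (g := unitsTeichmuller p S)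
    (DFunLike.congr_fun (unitsCoeffZero_comp_unitsTeichmuller p S))

end WittVector

open WittVector in
theorem coeff_zero_surjective_onto_mu_p (p : ℕ) [Fact p.Prime] (S : Type*) [CommRing S]
    [CharP S p] :
    ∃ (G : Subgroup (WittVector p S)ˣ) (μ : Subgroup Sˣ) (φ : G →* μ) (σ : μ →* G),
      (∀ u : (WittVector p S)ˣ,
        u ∈ G ↔ WittVector.frobenius (u : WittVector p S) = 1) ∧
      (∀ ζ : Sˣ, ζ ∈ μ ↔ (ζ : S) ^ p = 1) ∧
      (∀ u : G, ((φ u : Sˣ) : S) = ((u : (WittVector p S)ˣ) : WittVector p S).coeff 0) ∧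
      (∀ ζ : μ, ((σ ζ : (WittVector p S)ˣ) : WittVector p S) =
        WittVector.teichmuller p ((ζ : Sˣ) : S)) ∧
      Function.Surjective φ ∧
      φ.comp σ = MonoidHom.id μ := by
  exact ⟨frobeniusFixedUnits p S, rootsOfUnity p S, unitsCoeffZero p S, unitsTeichmuller p S,
    fun _ => mem_frobeniusFixedUnits, fun ζ => mem_rootsOfUnity' p ζ, fun _ => rfl, fun _ => rfl,
    unitsCoeffZero_surjective p S, unitsCoeffZero_comp_unitsTeichmuller p S⟩
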